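/- arXiv:2601.02119 — 6 statements merged into one kernel-verified Lean document; each statement's English description precedes it below -/
import Mathlib

section
/- Let G = (V, E) be a 2-connected finite simple graph and A ⊆ V a subset of vertices with #A ≥ 1 and #(V \ A) ≥ 2. If the induced subgraphs of G on A and on V \ A are both connected, then there exists a vertex x ∈ V \ A such that the induced subgraphs of G on A ∪ {x} and on V \ (A ∪ {x}) are both connected. -/
section Aux

variable {V : Type*}

/-- Reachability inside an induced subgraph, phrased on the ambient vertex type. -/
def Rch (G : SimpleGraph V) (S : Set V) (u v : V) : Prop :=
  ∃ (hu : u ∈ S) (hv : v ∈ S), (G.induce S).Reachable ⟨u, hu⟩ ⟨v, hv⟩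

namespace Rch

variable {G : SimpleGraph V} {S T : Set V} {u v w : V}

lemma refl (h : u ∈ S) : Rch G S u u := ⟨h, h, .refl _⟩

lemma mem_left (h : Rch G S u v) : u ∈ S := h.1
lemma mem_right (h : Rch G S u v) : v ∈ S := h.2.1

lemma symm (h : Rch G S u v) : Rch G S v u := by
  obtain ⟨hu, hv, r⟩ := h
  exact ⟨hv, hu, r.symm⟩

lemma trans (h1 : Rch G S u v) (h2 : Rch G S v w) : Rch G S u w := by
  obtain ⟨hu, hv, r1⟩ := h1
  obtain ⟨hv', hw, r2⟩ := h2
  exact ⟨hu, hw, r1.trans r2⟩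

lemma adj (hu : u ∈ S) (hv : v ∈ S) (h : G.Adj u v) : Rch G S u v :=
  ⟨hu, hv, SimpleGraph.Adj.reachable (by exact h)⟩

end Rch

lemma rch_mono_walk {G : SimpleGraph V} {S T : Set V} (hST : S ⊆ T) :
    ∀ {a b : ↥S}, (G.induce S).Walk a b → Rch G T ↑a ↑b := by
  intro a b w
  induction w with
  | @nil a => exact Rch.refl (hST a.2)
  | @cons a c b hadj w ih => exact (Rch.adj (hST a.2) (hST c.2) hadj).trans ih

lemma Rch.mono {G : SimpleGraph V} {S T : Set V} {u v : V} (hST : S ⊆ T)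
    (h : Rch G S u v) : Rch G T u v := by
  obtain ⟨hu, hv, r⟩ := h
  obtain ⟨w⟩ := r
  exact rch_mono_walk hST w

lemma conn_iff (G : SimpleGraph V) (S : Set V) :
    (G.induce S).Connected ↔ S.Nonempty ∧ ∀ u ∈ S, ∀ v ∈ S, Rch G S u v := by
  constructor
  · intro h
    have hne : S.Nonempty := by
      obtain ⟨⟨u, hu⟩⟩ := h.nonempty
      exact ⟨u, hu⟩
    exact ⟨hne, fun u hu v hv => ⟨hu, hv, h.preconnected _ _⟩⟩
  · rintro ⟨⟨u, hu⟩, h⟩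
    haveI : Nonempty ↥S := ⟨⟨u, hu⟩⟩
    refine ⟨fun a b => ?_⟩
    obtain ⟨ha, hb, r⟩ := h a a.2 b b.2
    exact r

/-- From a walk ending at `x`, extract a neighbour of `x` reachable avoiding `x`. -/
lemma rch_L1 {G : SimpleGraph V} {S : Set V} {x : V} :
    ∀ {a b : ↥S}, (G.induce S).Walk a b → (b : V) = x → (a : V) ≠ x →
      ∃ p ∈ S \ {x}, G.Adj p x ∧ Rch G (S \ {x}) ↑a p := by
  intro a b w
  induction w with
  | nil => exact fun hb ha => absurd hb ha
  | @cons a c b hadj w ih =>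
    intro hb ha
    have haS : (a : V) ∈ S \ {x} := ⟨a.2, ha⟩
    by_cases hcx : (c : V) = x
    · exact ⟨a, haS, by rw [← hcx]; exact hadj, Rch.refl haS⟩
    · obtain ⟨p, hp, hpx, hr⟩ := ih hb hcx
      exact ⟨p, hp, hpx, (Rch.adj haS ⟨c.2, hcx⟩ hadj).trans hr⟩

/-- A walk crossing out of `C` has a crossing edge. -/
lemma rch_L2 {G : SimpleGraph V} {S : Set V} (C : Set V) :
    ∀ {a b : ↥S}, (G.induce S).Walk a b → (a : V) ∈ C → (b : V) ∉ C →
      ∃ p q : V, p ∈ C ∧ p ∈ S ∧ q ∉ C ∧ q ∈ S ∧ G.Adj p q := by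
  intro a b w
  induction w with
  | nil => exact fun ha hb => absurd ha hb
  | @cons a c b hadj w ih =>
    intro ha hb
    by_cases hc : (c : V) ∈ C
    · exact ih hc hb
    · exact ⟨a, c, ha, a.2, hc, c.2, hadj⟩

/-- Any walk either avoids `y` or reaches `y`. -/
lemma rch_L3 {G : SimpleGraph V} {S : Set V} {y : V} :
    ∀ {a b : ↥S}, (G.induce S).Walk a b →
      Rch G (S \ {y}) ↑a ↑b ∨ Rch G S ↑a y := by
  intro a b w
  induction w with
  | @nil a =>
    by_cases ha : (a : V) = y
    · exact Or.inr (ha ▸ Rch.refl a.2)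
    · exact Or.inl (Rch.refl ⟨a.2, ha⟩)
  | @cons a c b hadj w ih =>
    by_cases ha : (a : V) = y
    · exact Or.inr (ha ▸ Rch.refl a.2)
    · rcases ih with h | h
      · exact Or.inl ((Rch.adj (show (a : V) ∈ S \ {y} from ⟨a.2, ha⟩) h.mem_left hadj).trans h)
      · exact Or.inr ((Rch.adj a.2 c.2 hadj).trans h)

end Aux

/-- Let `G` be a 2-connected finite simple graph (every
vertex-deleted induced subgraph is connected) and `A ⊆ V` with `#A ≥ 1` and
`#(V \ A) ≥ 2`.  If the induced subgraphs on `A` and on `Aᶜ` are connected,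
then some `x ∈ Aᶜ` keeps both `A ∪ {x}` and its complement connected. -/
theorem stmt_0 {V : Type*} [Fintype V] (G : SimpleGraph V)
    (h2conn : ∀ v : V, (G.induce ({v}ᶜ : Set V)).Connected)
    (A : Set V) (hA : 1 ≤ A.ncard) (hAc : 2 ≤ (Aᶜ : Set V).ncard)
    (hAconn : (G.induce A).Connected) (hAcconn : (G.induce (Aᶜ : Set V)).Connected) :
    ∃ x ∈ (Aᶜ : Set V), (G.induce (A ∪ {x})).Connected ∧
      (G.induce ((A ∪ {x})ᶜ : Set V)).Connected := by
  classical
  set B : Set V := Aᶜ with hB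
  obtain ⟨a₀, ha₀⟩ : A.Nonempty := Set.nonempty_of_ncard_ne_zero (by omega)
  obtain ⟨b₀, hb₀, b₁, hb₁, hbne⟩ : ∃ a ∈ B, ∃ b ∈ B, a ≠ b :=
    (Set.one_lt_ncard (Set.toFinite B)).mp (by omega)
  rw [conn_iff] at hAconn hAcconn
  obtain ⟨-, hAr⟩ := hAconn
  obtain ⟨-, hBr⟩ := hAcconn
  set S : Set V := {x | x ∈ B ∧ ∃ a ∈ A, G.Adj x a} with hS
  -- S is nonempty
  have hSne : S.Nonempty := by
    have h1 := (conn_iff G ({b₁}ᶜ)).mp (h2conn b₁)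
    have hb0 : b₀ ∈ ({b₁}ᶜ : Set V) := hbne
    have ha0 : a₀ ∈ ({b₁}ᶜ : Set V) := by
      intro h
      exact hb₁ (by rwa [show a₀ = b₁ from h] at ha₀)
    obtain ⟨_, _, r⟩ := h1.2 b₀ hb0 a₀ ha0
    obtain ⟨w⟩ := r
    have ha0B : a₀ ∉ B := fun h => h ha₀
    obtain ⟨p, q, hpC, hpX, hqC, hqX, hpq⟩ := rch_L2 B w hb₀ ha0B
    have hqA : q ∈ A := by_contra fun h => hqC h
    exact ⟨p, hpC, q, hqA, hpq⟩
  -- every vertex of B has a companion in B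
  have hBne2 : ∀ x ∈ B, (B \ {x}).Nonempty := by
    intro x hx
    rcases eq_or_ne x b₀ with rfl | h
    · exact ⟨b₁, hb₁, fun hh => hbne (show b₁ = x from hh).symm⟩
    · exact ⟨b₀, hb₀, fun hh => h (show b₀ = x from hh).symm⟩
  -- minimize the size of a reachability class
  set RC : V → V → Set V := fun x z => {w | Rch G (B \ {x}) z w} with hRC
  set F : Set ℕ := {n | ∃ x ∈ S, ∃ z ∈ B \ {x}, n = (RC x z).ncard} with hF
  have hFne : F.Nonempty := by
    obtain ⟨x₀, hx₀⟩ := hSne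
    obtain ⟨z₀, hz₀⟩ := hBne2 x₀ hx₀.1
    exact ⟨_, x₀, hx₀, z₀, hz₀, rfl⟩
  obtain ⟨m, hmF, hmin⟩ := Nat.lt_wfRel.wf.has_min F hFne
  obtain ⟨x, hxS, z, hz, hm⟩ := hmF
  set C : Set V := RC x z with hC
  have hzC : z ∈ C := Rch.refl hz
  have hCsub : C ⊆ B \ {x} := fun w hw => Rch.mem_right hw
  have hxB : x ∈ B := hxS.1
  -- find y = p ∈ S ∩ C using 2-connectivity at x
  have hax : a₀ ∈ ({x}ᶜ : Set V) := by
    intro h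
    exact hxB (by rwa [show a₀ = x from h] at ha₀)
  have h1 := (conn_iff G ({x}ᶜ)).mp (h2conn x)
  obtain ⟨_, _, r⟩ := h1.2 z hz.2 a₀ hax
  obtain ⟨w⟩ := r
  have ha₀C : a₀ ∉ C := fun h => (hCsub h).1 ha₀
  obtain ⟨p, q, hpC, hpX, hqC, hqX, hpq⟩ := rch_L2 C w hzC ha₀C
  have hpR : Rch G (B \ {x}) z p := hpC
  have hpBx : p ∈ B \ {x} := hpR.mem_right
  have hqA : q ∈ A := by
    by_contra hq
    exact hqC (hpR.trans (Rch.adj hpBx ⟨hq, hqX⟩ hpq))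
  have hyS : p ∈ S := ⟨hpBx.1, q, hqA, hpq⟩
  have hpx : p ≠ x := hpBx.2
  have hxBp : x ∈ B \ {p} := ⟨hxB, fun h => hpx (by rw [show x = p from h])⟩
  -- step A: vertices outside C reach x avoiding p
  have stepA : ∀ u ∈ B \ {x}, u ∉ C → Rch G (B \ {p}) u x := by
    intro u hu huC
    obtain ⟨_, _, r⟩ := hBr u hu.1 x hxB
    obtain ⟨w⟩ := r
    obtain ⟨p', hp', hp'x, hr'⟩ := rch_L1 w rfl hu.2
    have hry : ¬ Rch G (B \ {x}) u p := fun r => huC (hpR.trans r.symm)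
    obtain ⟨hu', hp'', r2⟩ := hr'
    obtain ⟨w2⟩ := r2
    rcases rch_L3 (y := p) w2 with h | h
    · have h' : Rch G (B \ {p}) u p' := h.mono (fun t ht => ⟨ht.1.1, ht.2⟩)
      exact h'.trans (Rch.adj h'.mem_right hxBp hp'x)
    · exact absurd h hry
  -- step B: vertices in C reach x avoiding p, by minimality
  have stepB : ∀ u ∈ C, u ≠ p → Rch G (B \ {p}) u x := by
    intro u huC hup
    by_contra hnr
    have huB : u ∈ B \ {p} := ⟨(hCsub huC).1, hup⟩
    have hsub : RC p u ⊆ C \ {p} := by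
      intro w' hw
      have hw' : Rch G (B \ {p}) u w' := hw
      have hwB : w' ∈ B \ {p} := hw'.mem_right
      have hwx : w' ≠ x := fun h => hnr (by rwa [h] at hw')
      have hwC : w' ∈ C := by
        by_contra hwC
        exact hnr (hw'.trans (stepA w' ⟨hwB.1, hwx⟩ hwC))
      exact ⟨hwC, hwB.2⟩
    have hlt : (RC p u).ncard < C.ncard := by
      refine Set.ncard_lt_ncard ⟨hsub.trans Set.diff_subset, fun hCs => ?_⟩
        (Set.toFinite C)
      exact (hsub (hCs hpC)).2 rfl
    exact hmin _ ⟨p, hyS, u, huB, rfl⟩ (hm ▸ hlt)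
  -- everything in B \ {p} reaches x
  have key : ∀ u ∈ B \ {p}, Rch G (B \ {p}) u x := by
    intro u hu
    rcases eq_or_ne u x with rfl | hux
    · exact Rch.refl hxBp
    rcases Classical.em (u ∈ C) with h | h
    · exact stepB u h hu.2
    · exact stepA u ⟨hu.1, hux⟩ h
  refine ⟨p, hpBx.1, ?_, ?_⟩
  · rw [conn_iff]
    refine ⟨⟨a₀, Or.inl ha₀⟩, ?_⟩
    have hstep : ∀ u ∈ A ∪ {p}, Rch G (A ∪ {p}) u q := by
      intro u hu
      rcases hu with hu | hu
      · exact (hAr u hu q hqA).mono Set.subset_union_left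
      · rw [show u = p from hu]
        exact Rch.adj (Or.inr rfl) (Or.inl hqA) hpq
    exact fun u hu v hv => (hstep u hu).trans (hstep v hv).symm
  · have hcompl : (A ∪ {p})ᶜ = B \ {p} := by
      rw [Set.compl_union, ← hB, Set.diff_eq]
    rw [hcompl, conn_iff]
    exact ⟨⟨x, hxBp⟩, fun u hu v hv => (key u hu).trans (key v hv).symm⟩
end

section
/- Every word w in the braid group B₃ is conjugate to an element of one of the following normal forms: Δ^{2k}; Δ^{2k}σ₁σ₂; Δ^{2k}(σ₁σ₂)²; Δ^{2k+1}; Δ^{2k}σ₁^{-p} with p > 0; Δ^{2k}σ₂^q with q > 0; or Δ^{2k}σ₁^{-p₁}σ₂^{q₁}⋯σ₁^{-p_r}σ₂^{q_r} with r, pᵢ, qᵢ > 0; where k ∈ ℤ. -/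
/-- The braid group on 3 strands, `B₃ = ⟨σ₁, σ₂ ∣ σ₁σ₂σ₁ = σ₂σ₁σ₂⟩`. -/
abbrev B3 : Type := PresentedGroup
  ({FreeGroup.of 0 * FreeGroup.of 1 * FreeGroup.of 0 *
     (FreeGroup.of 1 * FreeGroup.of 0 * FreeGroup.of 1)⁻¹} : Set (FreeGroup (Fin 2)))

/-- The generator `σ₁` of `B₃`. -/
def sigma1 : B3 := PresentedGroup.of 0
/-- The generator `σ₂` of `B₃`. -/
def sigma2 : B3 := PresentedGroup.of 1

/-- The half twist `Δ = σ₁σ₂σ₁`. -/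
def Delta : B3 := sigma1 * sigma2 * sigma1

namespace B3aux

lemma braid : sigma1 * sigma2 * sigma1 = sigma2 * sigma1 * sigma2 := by
  have h : (PresentedGroup.mk _ (FreeGroup.of 0 * FreeGroup.of 1 * FreeGroup.of 0 *
      (FreeGroup.of 1 * FreeGroup.of 0 * FreeGroup.of 1)⁻¹) : B3) = 1 := by
    apply (QuotientGroup.eq_one_iff _).2
    exact Subgroup.subset_normalClosure rfl
  have h2 := h
  rw [map_mul, map_inv] at h2
  rw [mul_inv_eq_one] at h2
  exact h2

noncomputable section

def a : B3 := sigma1 * sigma2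
def z : B3 := Delta ^ 2

lemma delta_eq' : Delta = sigma2 * sigma1 * sigma2 := braid

lemma delta_eq : Delta = sigma1 * sigma2 * sigma1 := rfl

lemma delta_s1 : Delta * sigma1 = sigma2 * Delta := by
  conv_lhs => rw [delta_eq']
  rw [delta_eq]; group

lemma delta_s2 : Delta * sigma2 = sigma1 * Delta := by
  conv_lhs => rw [delta_eq]
  rw [delta_eq']; group

lemma z_s1 : z * sigma1 = sigma1 * z := by
  rw [z]; rw [pow_two, mul_assoc, delta_s1, ← mul_assoc, delta_s2, mul_assoc, ← pow_two]

lemma z_s2 : z * sigma2 = sigma2 * z := by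
  rw [z]; rw [pow_two, mul_assoc, delta_s2, ← mul_assoc, delta_s1, mul_assoc, ← pow_two]

lemma z_comm (x : B3) : z * x = x * z := by
  have hgen : ∀ j : Fin 2, (PresentedGroup.of j : B3) ∈ Subgroup.centralizer {z} := by
    intro j
    rw [Subgroup.mem_centralizer_iff]
    intro g hg
    rcases hg with rfl
    fin_cases j
    · exact (z_s1).symm ▸ z_s1
    · exact z_s2
  have hx := PresentedGroup.generated_by _ _ hgen x
  rw [Subgroup.mem_centralizer_iff] at hx
  exact hx z rfl

lemma z_eq_a3 : z = a * a * a := by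
  have h2 : Delta * Delta = (sigma1*sigma2*sigma1) * (sigma2*sigma1*sigma2) :=
    congrArg₂ (· * ·) delta_eq delta_eq'
  rw [z, pow_two, h2, a]; group

end
end B3aux

-- letter identities, appended to basics conceptually
namespace B3aux

lemma z_eq : z = Delta * (sigma1 * sigma2 * sigma1) := by
  rw [z, pow_two]; exact congrArg (Delta * ·) delta_eq

def A (e : Bool) : B3 := if e then a * a else a
def cc (e : Bool) : B3 := if e then sigma2 else sigma1⁻¹

lemma e1 : a * a * Delta = z * sigma1 := by
  rw [z_eq_a3, a, delta_eq]; group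

lemma e2 : Delta * A false = z * cc false := by
  show Delta * a = z * sigma1⁻¹
  rw [z_eq, a]; group

lemma e3 : Delta * A true = z * cc true := by
  show Delta * (a * a) = z * sigma2
  rw [z_eq, a]; group

lemma e4 : a * Delta = z * sigma2⁻¹ := by
  rw [z_eq_a3, a, delta_eq]; group

lemma hs1 : sigma1 = z⁻¹ * (a * a * Delta) := by rw [e1]; group
lemma hs1i : sigma1⁻¹ = z⁻¹ * (Delta * a) := by
  have := e2; rw [show A false = a from rfl, show cc false = sigma1⁻¹ from rfl] at this
  rw [this]; group
lemma hs2 : sigma2 = z⁻¹ * (Delta * (a * a)) := by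
  have := e3; rw [show A true = a*a from rfl, show cc true = sigma2 from rfl] at this
  rw [this]; group
lemma hs2i : sigma2⁻¹ = z⁻¹ * (a * Delta) := by rw [e4]; group

-- A-letter merge facts
lemma aff : A false * A false = A true := rfl
lemma aft : A false * A true = z * 1 := by
  show a * (a * a) = z * 1
  rw [z_eq_a3]; group
lemma atf : A true * A false = z * 1 := by
  show (a * a) * a = z * 1
  rw [z_eq_a3]; group
lemma att : A true * A true = z * A false := by
  show (a * a) * (a * a) = z * a
  rw [z_eq_a3]; group

lemma zk_comm (k : ℤ) (x : B3) : z ^ k * x = x * z ^ k :=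
  (Commute.zpow_left (z_comm x) k)

lemma zshift (k : ℤ) (x : B3) : z ^ k * (z * x) = z ^ (k+1) * x := by
  rw [zpow_add_one]
  exact (mul_assoc _ _ _).symm

lemma zpow_eq (k : ℤ) : Delta ^ (2 * k) = z ^ k := by
  rw [z, ← zpow_natCast Delta 2, ← zpow_mul]
  norm_num

end B3aux

namespace B3aux

def optA : Option Bool → B3
  | none => 1
  | some e => A e

def PR : List Bool → B3
  | [] => 1
  | e :: m => PR m * (Delta * A e)

def optB : Bool → B3
  | false => 1
  | true => Delta

lemma optA_none : optA none = 1 := rfl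
lemma optA_some (e : Bool) : optA (some e) = A e := rfl
lemma PR_nil : PR [] = 1 := rfl
lemma PR_cons (e : Bool) (m : List Bool) : PR (e :: m) = PR m * (Delta * A e) := rfl
lemma optB_false : optB false = 1 := rfl
lemma optB_true : optB true = Delta := rfl

def Ev (s : Option Bool) (m : List Bool) (t : Bool) : B3 := optA s * PR m * optB t

lemma Ev_def (s m t) : Ev s m t = optA s * PR m * optB t := rfl

lemma pullz (x y : B3) : x * (z * y) = z * (x * y) := by
  rw [← mul_assoc, ← z_comm, mul_assoc]

def Reach (w : B3) : Prop := ∃ (k : ℤ) (s : Option Bool) (m : List Bool) (t : Bool),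
  w = z ^ k * Ev s m t

lemma reach_one : Reach 1 :=
  ⟨0, none, [], false, by rw [Ev_def, optA_none, PR_nil, optB_false]; simp⟩

lemma reach_mulB {w : B3} (h : Reach w) : Reach (w * Delta) := by
  obtain ⟨k, s, m, t, rfl⟩ := h
  cases t with
  | false =>
      refine ⟨k, s, m, true, ?_⟩
      rw [mul_assoc]
      congr 1
      rw [Ev_def, Ev_def, optB_false, optB_true, mul_one]
  | true =>
      refine ⟨k + 1, s, m, false, ?_⟩
      have h1 : Ev s m true * Delta = z * Ev s m false := by
        rw [Ev_def, Ev_def, optB_false, optB_true, mul_one, mul_assoc, ← pow_two, ← z, z_comm]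
      rw [mul_assoc, h1, zshift]

lemma reach_mulA {w : B3} (e : Bool) (h : Reach w) : Reach (w * A e) := by
  obtain ⟨k, s, m, t, rfl⟩ := h
  cases t with
  | true =>
      refine ⟨k, s, e :: m, false, ?_⟩
      rw [mul_assoc]
      congr 1
      rw [Ev_def, Ev_def, optB_false, optB_true, PR_cons, mul_one]
      group
  | false =>
      cases m with
      | nil =>
          have hev : ∀ o : Option Bool, Ev o [] false = optA o := by
            intro o; rw [Ev_def, PR_nil, optB_false, mul_one, mul_one]
          cases s with
          | none =>
              refine ⟨k, some e, [], false, ?_⟩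
              rw [mul_assoc, hev, hev, optA_none, one_mul, optA_some]
          | some f =>
              rw [mul_assoc, hev, optA_some]
              cases f <;> cases e
              · exact ⟨k, some true, [], false, by rw [aff, hev, optA_some]⟩
              · refine ⟨k + 1, none, [], false, ?_⟩
                rw [aft, zshift, hev, optA_none]
              · refine ⟨k + 1, none, [], false, ?_⟩
                rw [atf, zshift, hev, optA_none]
              · refine ⟨k + 1, some false, [], false, ?_⟩
                rw [att, zshift, hev, optA_some]
      | cons f m' =>
          have key : Ev s (f :: m') false * A e
              = optA s * PR m' * Delta * (A f * A e) := by
            rw [Ev_def, optB_false, mul_one, PR_cons]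
            group
          rw [mul_assoc, key]
          cases f <;> cases e
          · refine ⟨k, s, true :: m', false, ?_⟩
            rw [aff]
            congr 1
            rw [Ev_def, optB_false, mul_one, PR_cons]
            group
          · refine ⟨k + 1, s, m', true, ?_⟩
            rw [aft, pullz, zshift, mul_one]
            rw [Ev_def, optB_true]
          · refine ⟨k + 1, s, m', true, ?_⟩
            rw [atf, pullz, zshift, mul_one]
            rw [Ev_def, optB_true]
          · refine ⟨k + 1, s, false :: m', false, ?_⟩
            rw [att, pullz, zshift]
            congr 1
            rw [Ev_def, optB_false, mul_one, PR_cons]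
            group

lemma reach_zmul {w : B3} (j : ℤ) (h : Reach w) : Reach (z ^ j * w) := by
  obtain ⟨k, s, m, t, rfl⟩ := h
  exact ⟨j + k, s, m, t, by rw [← mul_assoc, ← zpow_add]⟩

lemma move_zinv (v x : B3) : v * (z⁻¹ * x) = z ^ (-1 : ℤ) * (v * x) := by
  have hc : Commute z v := z_comm v
  have hz : z⁻¹ * v = v * z⁻¹ := hc.inv_left
  rw [← mul_assoc, ← hz, mul_assoc, zpow_neg_one]

lemma reach_all (w : B3) : Reach w := by
  have hw : w ∈ Subgroup.closure (Set.range (PresentedGroup.of :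
      Fin 2 → B3)) := by
    rw [PresentedGroup.closure_range_of]; trivial
  have step : ∀ {v : B3} (g : B3), Reach v →
      (g = sigma1 ∨ g = sigma2 ∨ g = sigma1⁻¹ ∨ g = sigma2⁻¹) → Reach (v * g) := by
    rintro v g hv (rfl | rfl | rfl | rfl)
    · rw [hs1, move_zinv]
      have h2 : v * (a * a * Delta) = v * a * a * Delta := by group
      rw [h2]
      exact reach_zmul _ (reach_mulB (reach_mulA false (reach_mulA false hv)))
    · rw [hs2, move_zinv]
      have h2 : v * (Delta * (a * a)) = v * Delta * a * a := by group
      rw [h2]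
      exact reach_zmul _ (reach_mulA false (reach_mulA false (reach_mulB hv)))
    · rw [hs1i, move_zinv]
      have h2 : v * (Delta * a) = v * Delta * a := by group
      rw [h2]
      exact reach_zmul _ (reach_mulA false (reach_mulB hv))
    · rw [hs2i, move_zinv]
      have h2 : v * (a * Delta) = v * a * Delta := by group
      rw [h2]
      exact reach_zmul _ (reach_mulB (reach_mulA false hv))
  induction hw using Subgroup.closure_induction_right with
  | one => exact reach_one
  | mul_right y hy g hg ih =>
      obtain ⟨i, rfl⟩ := hg
      fin_cases i
      · exact step _ ih (Or.inl rfl)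
      · exact step _ ih (Or.inr (Or.inl rfl))
  | mul_inv_cancel y hy g hg ih =>
      obtain ⟨i, rfl⟩ := hg
      fin_cases i
      · exact step _ ih (Or.inr (Or.inr (Or.inl rfl)))
      · exact step _ ih (Or.inr (Or.inr (Or.inr rfl)))

end B3aux

namespace B3aux

lemma pullzk (k : ℤ) (x y : B3) : x * (z ^ k * y) = z ^ k * (x * y) := by
  rw [← mul_assoc, ← zk_comm, mul_assoc]

/-- The conclusion predicate of the main theorem. -/
def Concl (w : B3) : Prop := ∃ k : ℤ,
    IsConj w (Delta ^ (2 * k)) ∨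
    IsConj w (Delta ^ (2 * k) * (sigma1 * sigma2)) ∨
    IsConj w (Delta ^ (2 * k) * (sigma1 * sigma2) ^ 2) ∨
    IsConj w (Delta ^ (2 * k + 1)) ∨
    (∃ p : ℤ, 0 < p ∧ IsConj w (Delta ^ (2 * k) * sigma1 ^ (-p))) ∨
    (∃ q : ℤ, 0 < q ∧ IsConj w (Delta ^ (2 * k) * sigma2 ^ q)) ∨
    (∃ r : ℕ, 0 < r ∧ ∃ p q : ℕ → ℤ, (∀ i < r, 0 < p i ∧ 0 < q i) ∧
      IsConj w (Delta ^ (2 * k) *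
        ((List.range r).map (fun i => sigma1 ^ (-(p i)) * sigma2 ^ (q i))).prod))

lemma concl_conj {w w' : B3} (h : IsConj w w') (h' : Concl w') : Concl w := by
  obtain ⟨k, hk⟩ := h'
  refine ⟨k, ?_⟩
  rcases hk with h1 | h1 | h1 | h1 | ⟨p, hp, h1⟩ | ⟨q, hq, h1⟩ | ⟨r, hr, p, q, hpq, h1⟩
  · exact Or.inl (h.trans h1)
  · exact Or.inr (Or.inl (h.trans h1))
  · exact Or.inr (Or.inr (Or.inl (h.trans h1)))
  · exact Or.inr (Or.inr (Or.inr (Or.inl (h.trans h1))))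
  · exact Or.inr (Or.inr (Or.inr (Or.inr (Or.inl ⟨p, hp, h.trans h1⟩))))
  · exact Or.inr (Or.inr (Or.inr (Or.inr (Or.inr (Or.inl ⟨q, hq, h.trans h1⟩)))))
  · exact Or.inr (Or.inr (Or.inr (Or.inr (Or.inr (Or.inr ⟨r, hr, p, q, hpq, h.trans h1⟩)))))

lemma concl_eq {w w' : B3} (h : w = w') (h' : Concl w') : Concl w :=
  concl_conj (h ▸ IsConj.refl w) h'

lemma conj_comm (x y : B3) : IsConj (x * y) (y * x) := by
  rw [isConj_iff]
  exact ⟨x⁻¹, by group⟩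

lemma conj_zmul (k : ℤ) {x y : B3} (h : IsConj x y) : IsConj (z ^ k * x) (z ^ k * y) := by
  rw [isConj_iff] at h ⊢
  obtain ⟨c, rfl⟩ := h
  refine ⟨c, ?_⟩
  rw [← mul_assoc, ← zk_comm k c]
  group

/-- products of `(Δ a^{e})` pairs, in natural order -/
def Pn (n : List Bool) : B3 := (n.map (fun e => Delta * A e)).prod

lemma Pn_nil : Pn [] = 1 := rfl
lemma Pn_cons (e n) : Pn (e :: n) = (Delta * A e) * Pn n := by
  rw [Pn, Pn, List.map_cons, List.prod_cons]
lemma Pn_append (u v) : Pn (u ++ v) = Pn u * Pn v := by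
  rw [Pn, Pn, Pn, List.map_append, List.prod_append]

lemma PR_eq (m : List Bool) : PR m = Pn m.reverse := by
  induction m with
  | nil => rfl
  | cons e m ih =>
      rw [PR_cons, ih, List.reverse_cons, Pn_append]
      congr 1
      rw [Pn_cons, Pn_nil, mul_one]

def Cprod (n : List Bool) : B3 := (n.map cc).prod

lemma Cprod_nil : Cprod [] = 1 := rfl
lemma Cprod_cons (e n) : Cprod (e :: n) = cc e * Cprod n := by
  rw [Cprod, Cprod, List.map_cons, List.prod_cons]
lemma Cprod_append (u v) : Cprod (u ++ v) = Cprod u * Cprod v := by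
  rw [Cprod, Cprod, Cprod, List.map_append, List.prod_append]

lemma pair_eq (e : Bool) : Delta * A e = z * cc e := by
  cases e
  · exact e2
  · exact e3

lemma Pn_cc (n : List Bool) : Pn n = z ^ (n.length : ℤ) * Cprod n := by
  induction n with
  | nil => rw [Pn_nil, Cprod_nil]; simp
  | cons e n ih =>
      rw [Pn_cons, ih, pair_eq, Cprod_cons, mul_assoc, pullzk, ← mul_assoc, ← zpow_one_add]
      congr 2
      simp
      omega

/-- shape lemma: every boolean list is monotone or has a descent -/
lemma shape : ∀ n : List Bool,
    (∃ p q, n = List.replicate p false ++ List.replicate q true) ∨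
    (∃ u v, n = u ++ true :: false :: v) := by
  intro n
  induction n with
  | nil => exact Or.inl ⟨0, 0, rfl⟩
  | cons x n ih =>
      rcases ih with ⟨p, q, rfl⟩ | ⟨u, v, rfl⟩
      · cases x with
        | false => exact Or.inl ⟨p + 1, q, by rw [List.replicate_succ]; rfl⟩
        | true =>
            cases p with
            | zero => exact Or.inl ⟨0, q + 1, by rw [List.replicate_succ]; rfl⟩
            | succ p' =>
                refine Or.inr ⟨[], List.replicate p' false ++ List.replicate q true, ?_⟩
                rw [List.replicate_succ]
                rfl
      · exact Or.inr ⟨x :: u, v, rfl⟩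

def blk (pq : ℕ × ℕ) : List Bool := List.replicate pq.1 false ++ List.replicate pq.2 true

lemma peelF : ∀ l : List Bool, ∃ p l₁, l = List.replicate p false ++ l₁ ∧
    (l₁ = [] ∨ ∃ h, l₁ = true :: h) := by
  intro l
  induction l with
  | nil => exact ⟨0, [], rfl, Or.inl rfl⟩
  | cons x xs ih =>
      cases x with
      | true => exact ⟨0, true :: xs, rfl, Or.inr ⟨xs, rfl⟩⟩
      | false =>
          obtain ⟨p, l₁, rfl, h⟩ := ih
          exact ⟨p + 1, l₁, by rw [List.replicate_succ]; rfl, h⟩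

lemma peelT : ∀ l : List Bool, ∃ q l₁, l = List.replicate q true ++ l₁ ∧
    (l₁ = [] ∨ ∃ h, l₁ = false :: h) := by
  intro l
  induction l with
  | nil => exact ⟨0, [], rfl, Or.inl rfl⟩
  | cons x xs ih =>
      cases x with
      | false => exact ⟨0, false :: xs, rfl, Or.inr ⟨xs, rfl⟩⟩
      | true =>
          obtain ⟨q, l₁, rfl, h⟩ := ih
          exact ⟨q + 1, l₁, by rw [List.replicate_succ]; rfl, h⟩

lemma ends_true_of_append {u l₂ l₀ : List Bool} (h : u ++ l₂ = l₀ ++ [true]) (hne : l₂ ≠ []) :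
    ∃ l₂', l₂ = l₂' ++ [true] := by
  have h1 : l₂ = l₂.dropLast ++ [l₂.getLast hne] := (List.dropLast_append_getLast hne).symm
  have h2 : (u ++ l₂.dropLast) ++ [l₂.getLast hne] = l₀ ++ [true] := by
    rw [List.append_assoc, ← h1]; exact h
  have h3 : l₂.getLast hne = true := by
    have h4 := (List.append_inj' h2 rfl).2
    simpa using h4
  refine ⟨l₂.dropLast, ?_⟩
  conv_lhs => rw [h1]
  rw [h3]

lemma rle : ∀ N : ℕ, ∀ l : List Bool, l.length ≤ N →
    ∀ h l₀, l = false :: h → l = l₀ ++ [true] →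
    ∃ P : List (ℕ × ℕ), P ≠ [] ∧ (∀ pq ∈ P, 0 < pq.1 ∧ 0 < pq.2) ∧
      l = (P.map blk).flatten := by
  intro N
  induction N with
  | zero =>
      intro l hl h l₀ hh _
      subst hh
      simp at hl
  | succ N ih =>
      intro l hl h l₀ hh he
      obtain ⟨p, l₁, rfl, hl₁⟩ := peelF l
      have hp : 0 < p := by
        rcases Nat.eq_zero_or_pos p with rfl | hp
        · simp only [List.replicate_zero, List.nil_append] at hh
          rcases hl₁ with rfl | ⟨h', rfl⟩
          · exact absurd hh (by simp)
          · simp at hh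
        · exact hp
      have hl₁ne : l₁ ≠ [] := by
        rintro rfl
        have : true ∈ List.replicate p false ++ ([] : List Bool) := by
          rw [he]; simp
        simp at this
      rcases hl₁ with rfl | ⟨h', rfl⟩
      · exact absurd rfl hl₁ne
      obtain ⟨q, l₂, he₂, hl₂⟩ := peelT (true :: h')
      have hq : 0 < q := by
        rcases Nat.eq_zero_or_pos q with rfl | hq
        · simp only [List.replicate_zero, List.nil_append] at he₂
          rcases hl₂ with rfl | ⟨h'', rfl⟩
          · exact absurd he₂ (by simp)
          · simp at he₂
        · exact hq
      rcases hl₂ with rfl | ⟨h'', hfh⟩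
      · -- l₂ = [] : single block
        refine ⟨[(p, q)], by simp, ?_, ?_⟩
        · intro pq hpq
          simp at hpq
          subst hpq
          exact ⟨hp, hq⟩
        · rw [he₂]
          simp [blk]
      · -- l₂ nonempty, recurse
        have hlen : l₂.length ≤ N := by
          have h1 : (List.replicate p false ++ true :: h').length ≤ N + 1 := hl
          have h2 : (true :: h').length = q + l₂.length := by
            rw [he₂]; simp
          simp only [List.length_append, List.length_replicate, h2] at h1
          omega
        have hends : ∃ l₂', l₂ = l₂' ++ [true] := by
          apply ends_true_of_append (u := List.replicate p false ++ List.replicate q true)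
            (l₀ := l₀)
          · rw [List.append_assoc, ← he₂, ← he]
          · rw [hfh]; simp
        obtain ⟨l₂', hl₂'⟩ := hends
        obtain ⟨P', hPne, hPpos, hPeq⟩ := ih l₂ hlen h'' l₂' hfh hl₂'
        refine ⟨(p, q) :: P', by simp, ?_, ?_⟩
        · intro pq hpq
          rw [List.mem_cons] at hpq
          rcases hpq with hpq | hpq
          · subst hpq; exact ⟨hp, hq⟩
          · exact hPpos pq hpq
        · rw [he₂, List.map_cons, List.flatten_cons, ← hPeq, blk]
          simp

lemma cc_false : cc false = sigma1⁻¹ := rfl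
lemma cc_true : cc true = sigma2 := rfl

lemma Cprod_repF (p : ℕ) : Cprod (List.replicate p false) = sigma1 ^ (-(p : ℤ)) := by
  rw [Cprod, List.map_replicate, List.prod_replicate, cc_false, inv_pow, ← zpow_natCast, ← zpow_neg]

lemma Cprod_repT (q : ℕ) : Cprod (List.replicate q true) = sigma2 ^ (q : ℤ) := by
  rw [Cprod, List.map_replicate, List.prod_replicate, cc_true, ← zpow_natCast]

lemma Cprod_blk (pq : ℕ × ℕ) :
    Cprod (blk pq) = sigma1 ^ (-(pq.1 : ℤ)) * sigma2 ^ (pq.2 : ℤ) := by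
  rw [blk, Cprod_append, Cprod_repF, Cprod_repT]

lemma Cprod_flatten (P : List (ℕ × ℕ)) :
    Cprod ((P.map blk).flatten) =
      (P.map (fun pq => sigma1 ^ (-(pq.1 : ℤ)) * sigma2 ^ (pq.2 : ℤ))).prod := by
  induction P with
  | nil => rfl
  | cons pq P ih =>
      rw [List.map_cons, List.flatten_cons, Cprod_append, ih, Cprod_blk, List.map_cons,
        List.prod_cons]

lemma rangeProd {M : Type*} [Monoid M] (g : ℕ × ℕ → M) (d : ℕ × ℕ) :
    ∀ P : List (ℕ × ℕ),
      ((List.range P.length).map (fun i => g (P.getD i d))).prod = (P.map g).prod := by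
  intro P
  induction P with
  | nil => rfl
  | cons x P ih =>
      rw [List.length_cons, List.range_succ_eq_map, List.map_cons, List.prod_cons,
        List.map_cons, List.prod_cons, List.map_map]
      congr 1

end B3aux

namespace B3aux

lemma z_def : z = Delta ^ 2 := rfl

lemma concl_zk (k : ℤ) : Concl (z ^ k) :=
  ⟨k, Or.inl (by rw [zpow_eq])⟩

lemma concl_a (k : ℤ) : Concl (z ^ k * a) :=
  ⟨k, Or.inr (Or.inl (by rw [zpow_eq]; exact IsConj.refl _))⟩

lemma concl_aa (k : ℤ) : Concl (z ^ k * (a * a)) :=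
  ⟨k, Or.inr (Or.inr (Or.inl (by rw [zpow_eq, pow_two]; exact IsConj.refl _)))⟩

lemma concl_delta (k : ℤ) : Concl (z ^ k * Delta) :=
  ⟨k, Or.inr (Or.inr (Or.inr (Or.inl (by rw [zpow_add, zpow_eq, zpow_one]))))⟩

lemma concl_s1 (k : ℤ) (p : ℕ) (hp : 0 < p) : Concl (z ^ k * sigma1 ^ (-(p : ℤ))) := by
  refine ⟨k, Or.inr (Or.inr (Or.inr (Or.inr (Or.inl ⟨(p : ℤ), by exact_mod_cast hp, ?_⟩))))⟩
  rw [zpow_eq]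

lemma concl_s2 (k : ℤ) (q : ℕ) (hq : 0 < q) : Concl (z ^ k * sigma2 ^ (q : ℤ)) := by
  refine ⟨k, Or.inr (Or.inr (Or.inr (Or.inr (Or.inr (Or.inl ⟨(q : ℤ), by exact_mod_cast hq, ?_⟩)))))⟩
  rw [zpow_eq]

lemma concl_blocks (k : ℤ) (P : List (ℕ × ℕ)) (hne : P ≠ [])
    (hpos : ∀ pq ∈ P, 0 < pq.1 ∧ 0 < pq.2) :
    Concl (z ^ k * (P.map (fun pq => sigma1 ^ (-(pq.1 : ℤ)) * sigma2 ^ (pq.2 : ℤ))).prod) := by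
  refine ⟨k, Or.inr (Or.inr (Or.inr (Or.inr (Or.inr (Or.inr
    ⟨P.length, List.length_pos_iff.2 hne,
     fun i => ((P.getD i (1, 1)).1 : ℤ), fun i => ((P.getD i (1, 1)).2 : ℤ), ?_, ?_⟩)))))⟩
  · intro i hi
    dsimp only
    rw [List.getD_eq_getElem _ _ hi]
    have := hpos P[i] (List.getElem_mem hi)
    exact ⟨by exact_mod_cast this.1, by exact_mod_cast this.2⟩
  · rw [zpow_eq]
    rw [rangeProd (fun pq => sigma1 ^ (-(pq.1 : ℤ)) * sigma2 ^ (pq.2 : ℤ)) (1, 1) P]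

lemma coreC (k : ℤ) (n : List Bool) : Concl (z ^ k * Cprod n) := by
  rcases shape n with ⟨p, q, rfl⟩ | ⟨u, v, rfl⟩
  · have hC : Cprod (List.replicate p false ++ List.replicate q true)
        = sigma1 ^ (-(p : ℤ)) * sigma2 ^ (q : ℤ) := by
      rw [Cprod_append, Cprod_repF, Cprod_repT]
    rcases Nat.eq_zero_or_pos p with rfl | hp <;> rcases Nat.eq_zero_or_pos q with rfl | hq
    · refine concl_eq ?_ (concl_zk k)
      rw [hC]; simp
    · refine concl_eq ?_ (concl_s2 k q hq)
      rw [hC]; simp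
    · refine concl_eq ?_ (concl_s1 k p hp)
      rw [hC]; simp
    · refine concl_eq ?_ (concl_blocks k [(p, q)] (by simp) ?_)
      · rw [hC]
        simp
      · intro pq hpq
        simp at hpq
        subst hpq
        exact ⟨hp, hq⟩
  · set l' : List Bool := false :: (v ++ u ++ [true]) with hl'
    have hx : Cprod (u ++ true :: false :: v)
        = (Cprod u * cc true) * (cc false * Cprod v) := by
      rw [Cprod_append, Cprod_cons, Cprod_cons]; group
    have hy : Cprod l' = (cc false * Cprod v) * (Cprod u * cc true) := by
      rw [hl', Cprod_cons, Cprod_append, Cprod_append, Cprod_cons, Cprod_nil]; group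
    have hconj : IsConj (z ^ k * Cprod (u ++ true :: false :: v)) (z ^ k * Cprod l') := by
      refine conj_zmul k ?_
      rw [hx, hy]
      exact conj_comm _ _
    refine concl_conj hconj ?_
    obtain ⟨P, hPne, hPpos, hPeq⟩ := rle l'.length l' le_rfl (v ++ u ++ [true])
      (false :: (v ++ u)) rfl (by rw [hl']; simp)
    refine concl_eq ?_ (concl_blocks k P hPne hPpos)
    rw [hPeq] at hy ⊢
    rw [Cprod_flatten]

lemma core (k : ℤ) (n : List Bool) : Concl (z ^ k * Pn n) := by
  rw [Pn_cc, ← mul_assoc, ← zpow_add]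
  exact coreC _ _

lemma aux : ∀ N : ℕ, ∀ n : List Bool, n.length ≤ N → ∀ k : ℤ,
    Concl (z ^ k * (Pn n * Delta)) ∧ (∀ e, Concl (z ^ k * (Pn n * A e))) := by
  intro N
  induction N with
  | zero =>
      intro n hn k
      have hnil : n = [] := List.eq_nil_of_length_eq_zero (Nat.le_zero.1 hn)
      subst hnil
      constructor
      · exact concl_eq (by rw [Pn_nil, one_mul]) (concl_delta k)
      · intro e
        cases e
        · exact concl_eq (by rw [Pn_nil, one_mul]; rfl) (concl_a k)
        · exact concl_eq (by rw [Pn_nil, one_mul]; rfl) (concl_aa k)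
  | succ N ih =>
      intro n hn k
      constructor
      · cases n with
        | nil => exact concl_eq (by rw [Pn_nil, one_mul]) (concl_delta k)
        | cons e n' =>
            have hlen : n'.length ≤ N := by
              simp only [List.length_cons] at hn; omega
            have step1 : IsConj (z ^ k * (Pn (e :: n') * Delta))
                (z ^ k * (Delta * Pn (e :: n'))) := conj_zmul k (conj_comm _ _)
            have step2 : z ^ k * (Delta * Pn (e :: n'))
                = z ^ (k + 1) * (A e * Pn n') := by
              rw [Pn_cons]
              rw [show Delta * ((Delta * A e) * Pn n') = (Delta * Delta) * (A e * Pn n') by group]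
              rw [← pow_two, ← z_def, zshift]
            have step3 : IsConj (z ^ (k + 1) * (A e * Pn n'))
                (z ^ (k + 1) * (Pn n' * A e)) := conj_zmul _ (conj_comm _ _)
            exact concl_conj step1 (concl_eq step2 (concl_conj step3 ((ih n' hlen (k + 1)).2 e)))
      · intro e
        rcases n.eq_nil_or_concat' with rfl | ⟨n', f, rfl⟩
        · cases e
          · exact concl_eq (by rw [Pn_nil, one_mul]; rfl) (concl_a k)
          · exact concl_eq (by rw [Pn_nil, one_mul]; rfl) (concl_aa k)
        · have hlen : n'.length ≤ N := by
            simp only [List.length_append, List.length_cons] at hn; omega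
          have key : Pn (n' ++ [f]) * A e = Pn n' * (Delta * (A f * A e)) := by
            rw [Pn_append, Pn_cons, Pn_nil]; group
          rw [key]
          cases f <;> cases e
          · refine concl_eq ?_ (core k (n' ++ [true]))
            rw [aff, Pn_append, Pn_cons, Pn_nil]
            group
          · rw [aft, mul_one, ← z_comm, pullz, zshift]
            exact (ih n' hlen (k + 1)).1
          · rw [atf, mul_one, ← z_comm, pullz, zshift]
            exact (ih n' hlen (k + 1)).1
          · rw [att, pullz Delta, pullz, zshift]
            refine concl_eq ?_ (core (k + 1) (n' ++ [false]))
            rw [Pn_append, Pn_cons, Pn_nil]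
            group

end B3aux


open B3aux

/-- **Murasugi normal forms.** Every `w ∈ B₃` is conjugate to an element
of one of the forms `Δ^{2k}`, `Δ^{2k}σ₁σ₂`, `Δ^{2k}(σ₁σ₂)²`, `Δ^{2k+1}`,
`Δ^{2k}σ₁^{-p}` (`p > 0`), `Δ^{2k}σ₂^{q}` (`q > 0`), or
`Δ^{2k}σ₁^{-p₁}σ₂^{q₁}⋯σ₁^{-p_r}σ₂^{q_r}` (`r, pᵢ, qᵢ > 0`), with `k ∈ ℤ`. -/
theorem stmt_4 (w : B3) : ∃ k : ℤ,
    IsConj w (Delta ^ (2 * k)) ∨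
    IsConj w (Delta ^ (2 * k) * (sigma1 * sigma2)) ∨
    IsConj w (Delta ^ (2 * k) * (sigma1 * sigma2) ^ 2) ∨
    IsConj w (Delta ^ (2 * k + 1)) ∨
    (∃ p : ℤ, 0 < p ∧ IsConj w (Delta ^ (2 * k) * sigma1 ^ (-p))) ∨
    (∃ q : ℤ, 0 < q ∧ IsConj w (Delta ^ (2 * k) * sigma2 ^ q)) ∨
    (∃ r : ℕ, 0 < r ∧ ∃ p q : ℕ → ℤ, (∀ i < r, 0 < p i ∧ 0 < q i) ∧
      IsConj w (Delta ^ (2 * k) *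
        ((List.range r).map (fun i => sigma1 ^ (-(p i)) * sigma2 ^ (q i))).prod)) := by
  suffices h : Concl w from h
  obtain ⟨k, s, m, t, rfl⟩ := reach_all w
  have hEv : Ev s m t = optA s * Pn m.reverse * optB t := by
    rw [Ev_def, PR_eq]
  cases s with
  | none =>
      cases t with
      | false =>
          refine concl_eq ?_ (core k m.reverse)
          rw [hEv, optA_none, optB_false, one_mul, mul_one]
      | true =>
          refine concl_eq ?_ ((aux m.reverse.length m.reverse le_rfl k).1)
          rw [hEv, optA_none, optB_true, one_mul]
  | some e =>
      cases t with
      | false =>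
          have h1 : z ^ k * Ev (some e) m false = z ^ k * (A e * Pn m.reverse) := by
            rw [hEv, optA_some, optB_false, mul_one]
          rw [h1]
          exact concl_conj (conj_zmul k (conj_comm _ _))
            ((aux m.reverse.length m.reverse le_rfl k).2 e)
      | true =>
          have h1 : z ^ k * Ev (some e) m true
              = z ^ k * (A e * (Pn m.reverse * Delta)) := by
            rw [hEv, optA_some, optB_true]
            congr 1
            exact mul_assoc _ _ _
          rw [h1]
          refine concl_conj (conj_zmul k (conj_comm _ _)) ?_
          refine concl_eq ?_ (core k (m.reverse ++ [e]))
          congr 1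
          rw [Pn_append, Pn_cons, Pn_nil]
          group
end

section
/- In the braid group B_t on t strands, the inverse of the element Δ^{2k} σ₁^{-p₁} σ₂^{q₁} ⋯ σ₁^{-p_r} σ₂^{q_r} is conjugate to Δ^{-2k} σ₁^{-q_r} σ₂^{p_r} ⋯ σ₁^{-q₁} σ₂^{p₁} in B₃. -/
theorem braid : sigma1 * sigma2 * sigma1 = sigma2 * sigma1 * sigma2 := by
  have h : (QuotientGroup.mk (FreeGroup.of 0 * FreeGroup.of 1 * FreeGroup.of 0 *
     (FreeGroup.of 1 * FreeGroup.of 0 * FreeGroup.of 1)⁻¹) : B3) = 1 := by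
    rw [QuotientGroup.eq_one_iff]
    exact Subgroup.subset_normalClosure rfl
  have h2 : (QuotientGroup.mk (FreeGroup.of 0 * FreeGroup.of 1 * FreeGroup.of 0 *
     (FreeGroup.of 1 * FreeGroup.of 0 * FreeGroup.of 1)⁻¹) : B3)
    = sigma1 * sigma2 * sigma1 * (sigma2 * sigma1 * sigma2)⁻¹ := rfl
  rw [h2] at h
  group at h ⊢
  exact (mul_inv_eq_one.mp h)

theorem delta_s1 : Delta * sigma1 = sigma2 * Delta := by
  unfold Delta
  rw [show sigma2 * (sigma1 * sigma2 * sigma1) = (sigma2 * sigma1 * sigma2) * sigma1 by group,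
    ← braid]

theorem delta_s2 : Delta * sigma2 = sigma1 * Delta := by
  unfold Delta; nth_rewrite 2 [braid]; group

theorem delta_s1_pow (n : ℤ) : Delta * sigma1 ^ n * Delta⁻¹ = sigma2 ^ n := by
  have h : Delta * sigma1 * Delta⁻¹ = sigma2 := by rw [delta_s1]; group
  rw [← h, ← conj_zpow]

theorem delta_s2_pow (n : ℤ) : Delta * sigma2 ^ n * Delta⁻¹ = sigma1 ^ n := by
  have h : Delta * sigma2 * Delta⁻¹ = sigma1 := by rw [delta_s2]; group
  rw [← h, ← conj_zpow]

theorem conj_term (a b : ℤ) :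
    Delta * (sigma1 ^ (-a) * sigma2 ^ b)⁻¹ * Delta⁻¹ = sigma1 ^ (-b) * sigma2 ^ a := by
  have h1 := delta_s1_pow a
  have h2 := delta_s2_pow (-b)
  calc Delta * (sigma1 ^ (-a) * sigma2 ^ b)⁻¹ * Delta⁻¹
      = (Delta * sigma2 ^ (-b) * Delta⁻¹) * (Delta * sigma1 ^ a * Delta⁻¹) := by group
    _ = sigma1 ^ (-b) * sigma2 ^ a := by rw [h1, h2]

theorem key (n : ℕ) (p q : ℕ → ℕ) :
    Delta * (((List.range n).map (fun i => sigma1 ^ (-(p i : ℤ)) * sigma2 ^ (q i : ℤ))).prod)⁻¹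
      * Delta⁻¹
    = ((List.range n).map
        (fun i => sigma1 ^ (-(q (n - 1 - i) : ℤ)) * sigma2 ^ (p (n - 1 - i) : ℤ))).prod := by
  induction n with
  | zero => simp
  | succ m ih =>
    conv_lhs => rw [List.range_succ]
    conv_rhs => rw [List.range_succ_eq_map]
    simp only [List.map_append, List.map_cons, List.map_nil, List.map_map, List.prod_append,
      List.prod_cons, List.prod_nil, mul_one, one_mul, inv_one]
    have e1 : Delta * ((((List.range m).map
          (fun i => sigma1 ^ (-(p i : ℤ)) * sigma2 ^ (q i : ℤ))).prod) *
        (sigma1 ^ (-(p m : ℤ)) * sigma2 ^ (q m : ℤ)))⁻¹ * Delta⁻¹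
      = (Delta * (sigma1 ^ (-(p m : ℤ)) * sigma2 ^ (q m : ℤ))⁻¹ * Delta⁻¹) *
        (Delta * (((List.range m).map
          (fun i => sigma1 ^ (-(p i : ℤ)) * sigma2 ^ (q i : ℤ))).prod)⁻¹ * Delta⁻¹) := by group
    rw [e1, conj_term, ih]
    have hl : ((List.range m).map
        ((fun i => sigma1 ^ (-(q (m + 1 - 1 - i) : ℤ)) * sigma2 ^ ((p (m + 1 - 1 - i)) : ℤ))
          ∘ Nat.succ))
        = (List.range m).map
          (fun i => sigma1 ^ (-(q (m - 1 - i) : ℤ)) * sigma2 ^ ((p (m - 1 - i)) : ℤ)) := by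
      apply List.map_congr_left
      intro a _
      simp only [Function.comp_apply]
      have h1 : m + 1 - 1 - Nat.succ a = m - 1 - a := by omega
      rw [h1]
    rw [hl]
    norm_num

/-- In `B₃`, the inverse of `Δ^{2k} σ₁^{-p₁} σ₂^{q₁} ⋯ σ₁^{-p_r} σ₂^{q_r}`
is conjugate to `Δ^{-2k} σ₁^{-q_r} σ₂^{p_r} ⋯ σ₁^{-q₁} σ₂^{p₁}`.
Here `p i`, `q i` stand for `p_{i+1}`, `q_{i+1}`. -/
theorem stmt_7 (k : ℤ) (r : ℕ) (hr : 0 < r) (p q : ℕ → ℕ)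
    (hp : ∀ i < r, 0 < p i) (hq : ∀ i < r, 0 < q i) :
    IsConj
      ((Delta ^ (2 * k) *
        ((List.range r).map (fun i => sigma1 ^ (-(p i : ℤ)) * sigma2 ^ (q i : ℤ))).prod)⁻¹)
      (Delta ^ (-(2 * k)) *
        ((List.range r).map
          (fun i => sigma1 ^ (-(q (r - 1 - i) : ℤ)) * sigma2 ^ (p (r - 1 - i) : ℤ))).prod) := by
  rw [isConj_iff]
  set P := ((List.range r).map (fun i => sigma1 ^ (-(p i : ℤ)) * sigma2 ^ (q i : ℤ))).prod with hP
  refine ⟨Delta * P, ?_⟩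
  have h1 : (Delta * P) * ((Delta ^ (2 * k) * P)⁻¹) * (Delta * P)⁻¹
      = Delta ^ (-(2 * k)) * (Delta * P⁻¹ * Delta⁻¹) := by group
  rw [h1, hP, key]
end

section
/- Let R be a commutative ring and let (C, d) be a cochain complex of R-modules such that in degrees n and n+1 there are direct sum decompositions C^n = C₁^n ⊕ C₂^n and C^{n+1} = C₁^{n+1} ⊕ C₂^{n+1}, with differential d^n given in block form by the matrix [[φ, δ], [γ, ε]]. If φ : C₁^n → C₁^{n+1} is an isomorphism, then C is chain homotopy equivalent to the complex C' which agrees with C outside degrees n, n+1, has C'^n = C₂^n and C'^{n+1} = C₂^{n+1}, with differential ε − γ∘φ⁻¹∘δ in degree n, the restriction β of d^{n-1} to the second summand in degree n−1, and the restriction ν of d^{n+1} to the second summand in degree n+1. -/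
/-!
Write `dⁿ = [[φ, δ], [γ, ε]]` in the given decompositions. In degrees `n` and `n + 1` let
`p : Cⁿ → C₂ⁿ, (a, b) ↦ b` and `p : Cⁿ⁺¹ → C₂ⁿ⁺¹, (a', b') ↦ b' - γ φ⁻¹ a'`, with sections
`s : b ↦ (-φ⁻¹ δ b, b)` and `s : b' ↦ (0, b')`; elsewhere `p = s = id`. Then `p s = id` and
`s p = id + d h + h d` for the homotopy `h = -φ⁻¹ : C₁ⁿ⁺¹ → C₁ⁿ`. Together with `p d h = 0` and
`h d s = 0` this makes `p d s` a differential for which `p` and `s` are chain maps, hence mutually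
inverse homotopy equivalences; in degree `n`, `p d s = ε - γ φ⁻¹ δ`.
-/

open CategoryTheory CategoryTheory.Limits

section

variable {R : Type} [CommRing R]

/-- Block entry `φ : C₁ⁿ → C₁ⁿ⁺¹` of the differential `dⁿ` with respect to the direct sum
decompositions `C.X n ≅ A ⊞ B`, `C.X (n+1) ≅ A' ⊞ B'`. -/
noncomputable def blkPhi (C : CochainComplex (ModuleCat R) ℤ) (n : ℤ)
    {A B A' B' : ModuleCat R} (e₁ : C.X n ≅ A ⊞ B) (e₂ : C.X (n + 1) ≅ A' ⊞ B') :
    A ⟶ A' :=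
  biprod.inl ≫ e₁.inv ≫ C.d n (n + 1) ≫ e₂.hom ≫ biprod.fst

/-- Block entry `δ : C₂ⁿ → C₁ⁿ⁺¹`. -/
noncomputable def blkDelta (C : CochainComplex (ModuleCat R) ℤ) (n : ℤ)
    {A B A' B' : ModuleCat R} (e₁ : C.X n ≅ A ⊞ B) (e₂ : C.X (n + 1) ≅ A' ⊞ B') :
    B ⟶ A' :=
  biprod.inr ≫ e₁.inv ≫ C.d n (n + 1) ≫ e₂.hom ≫ biprod.fst

/-- Block entry `γ : C₁ⁿ → C₂ⁿ⁺¹`. -/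
noncomputable def blkGamma (C : CochainComplex (ModuleCat R) ℤ) (n : ℤ)
    {A B A' B' : ModuleCat R} (e₁ : C.X n ≅ A ⊞ B) (e₂ : C.X (n + 1) ≅ A' ⊞ B') :
    A ⟶ B' :=
  biprod.inl ≫ e₁.inv ≫ C.d n (n + 1) ≫ e₂.hom ≫ biprod.snd

/-- Block entry `ε : C₂ⁿ → C₂ⁿ⁺¹`. -/
noncomputable def blkEps (C : CochainComplex (ModuleCat R) ℤ) (n : ℤ)
    {A B A' B' : ModuleCat R} (e₁ : C.X n ≅ A ⊞ B) (e₂ : C.X (n + 1) ≅ A' ⊞ B') :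
    B ⟶ B' :=
  biprod.inr ≫ e₁.inv ≫ C.d n (n + 1) ≫ e₂.hom ≫ biprod.snd

universe v u

namespace CochainComplex

section Splice

variable {V : Type u} [Category.{v} V] [HasZeroMorphisms V]
  (C : CochainComplex V ℤ) (n : ℤ) {B B' : V}

def spliceX (B B' : V) (i : ℤ) : V :=
  if i = n then B else if i = n + 1 then B' else C.X i

lemma spliceX_self : C.spliceX n B B' n = B := if_pos rfl

lemma spliceX_succ : C.spliceX n B B' (n + 1) = B' := by
  simp [spliceX]

lemma spliceX_of_ne {i : ℤ} (h₀ : i ≠ n) (h₁ : i ≠ n + 1) : C.spliceX n B B' i = C.X i := by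
  simp [spliceX, h₀, h₁]

variable {C n}

def toSpliceX (a : C.X n ⟶ B) (b : C.X (n + 1) ⟶ B') (i : ℤ) : C.X i ⟶ C.spliceX n B B' i :=
  if h₀ : i = n then eqToHom (by rw [h₀]) ≫ a ≫ eqToHom (by rw [h₀, spliceX_self])
  else if h₁ : i = n + 1 then eqToHom (by rw [h₁]) ≫ b ≫ eqToHom (by rw [h₁, spliceX_succ])
  else eqToHom (spliceX_of_ne C n h₀ h₁).symm

def fromSpliceX (a : B ⟶ C.X n) (b : B' ⟶ C.X (n + 1)) (i : ℤ) : C.spliceX n B B' i ⟶ C.X i :=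
  if h₀ : i = n then eqToHom (by rw [h₀, spliceX_self]) ≫ a ≫ eqToHom (by rw [h₀])
  else if h₁ : i = n + 1 then eqToHom (by rw [h₁, spliceX_succ]) ≫ b ≫ eqToHom (by rw [h₁])
  else eqToHom (spliceX_of_ne C n h₀ h₁)

variable (a : C.X n ⟶ B) (b : C.X (n + 1) ⟶ B') (a' : B ⟶ C.X n) (b' : B' ⟶ C.X (n + 1))

lemma toSpliceX_self : toSpliceX a b n = a ≫ eqToHom (spliceX_self C n).symm := by
  simp [toSpliceX]

lemma toSpliceX_succ : toSpliceX a b (n + 1) = b ≫ eqToHom (spliceX_succ C n).symm := by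
  simp [toSpliceX]

lemma toSpliceX_of_ne {i : ℤ} (h₀ : i ≠ n) (h₁ : i ≠ n + 1) :
    toSpliceX a b i = eqToHom (spliceX_of_ne C n h₀ h₁).symm := by
  simp [toSpliceX, h₀, h₁]

lemma fromSpliceX_self : fromSpliceX a' b' n = eqToHom (spliceX_self C n) ≫ a' := by
  simp [fromSpliceX]

lemma fromSpliceX_succ : fromSpliceX a' b' (n + 1) = eqToHom (spliceX_succ C n) ≫ b' := by
  simp [fromSpliceX]

lemma fromSpliceX_of_ne {i : ℤ} (h₀ : i ≠ n) (h₁ : i ≠ n + 1) :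
    fromSpliceX a' b' i = eqToHom (spliceX_of_ne C n h₀ h₁) := by
  simp [fromSpliceX, h₀, h₁]

lemma toSpliceX_comp_fromSpliceX_of_ne {i : ℤ} (h₀ : i ≠ n) (h₁ : i ≠ n + 1) :
    toSpliceX a b i ≫ fromSpliceX a' b' i = 𝟙 _ := by
  simp [toSpliceX_of_ne, fromSpliceX_of_ne, h₀, h₁]

lemma fromSpliceX_comp_toSpliceX (ha : a' ≫ a = 𝟙 B) (hb : b' ≫ b = 𝟙 B') (i : ℤ) :
    fromSpliceX a' b' i ≫ toSpliceX a b i = 𝟙 _ := by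
  by_cases h₀ : i = n
  · subst h₀
    simp [toSpliceX_self, fromSpliceX_self, reassoc_of% ha]
  by_cases h₁ : i = n + 1
  · subst h₁
    simp [toSpliceX_succ, fromSpliceX_succ, reassoc_of% hb]
  simp [toSpliceX_of_ne, fromSpliceX_of_ne, h₀, h₁]

end Splice

section DegreewiseRetract

variable {V : Type u} [Category.{v} V] [Preadditive V]
  (C : CochainComplex V ℤ) {X : ℤ → V} (p : ∀ i, C.X i ⟶ X i) (s : ∀ i, X i ⟶ C.X i)
  (hp : ∀ i, p i ≫ s i ≫ C.d i (i + 1) ≫ p (i + 1) = C.d i (i + 1) ≫ p (i + 1))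
  (hs : ∀ i, s i ≫ C.d i (i + 1) ≫ p (i + 1) ≫ s (i + 1) = s i ≫ C.d i (i + 1))

abbrev ofDegreewiseRetract : CochainComplex V ℤ where
  X := X
  d i j := s i ≫ C.d i j ≫ p j
  shape i j hij := by rw [C.shape i j hij, zero_comp, comp_zero]
  d_comp_d' i j k hij hjk := by
    obtain rfl : j = i + 1 := hij.symm
    obtain rfl : k = i + 1 + 1 := hjk.symm
    simp only [Category.assoc, reassoc_of% (hs i), HomologicalComplex.d_comp_d_assoc,
      zero_comp, comp_zero]

@[simps]
def ofDegreewiseRetract.π : C ⟶ C.ofDegreewiseRetract p s hs where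
  f := p
  comm' i j hij := by
    obtain rfl : j = i + 1 := hij.symm
    exact hp i

@[simps]
def ofDegreewiseRetract.ι : C.ofDegreewiseRetract p s hs ⟶ C where
  f := s
  comm' i j hij := by
    obtain rfl : j = i + 1 := hij.symm
    simpa only [Category.assoc] using (hs i).symm

def ofDegreewiseRetract.homotopyEquiv (hsp : ∀ i, s i ≫ p i = 𝟙 (X i))
    (H : Homotopy (ofDegreewiseRetract.π C p s hp hs ≫ ofDegreewiseRetract.ι C p s hs) (𝟙 C)) :
    HomotopyEquiv C (C.ofDegreewiseRetract p s hs) where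
  hom := ofDegreewiseRetract.π C p s hp hs
  inv := ofDegreewiseRetract.ι C p s hs
  homotopyHomInvId := H
  homotopyInvHomId := Homotopy.ofEq (by ext i; exact hsp i)

end DegreewiseRetract

end CochainComplex

namespace Homotopy

variable {V : Type u} [Category.{v} V] [Preadditive V]
open CochainComplex.HomComplex

def ofSingle {K L : CochainComplex V ℤ} {φ₁ φ₂ : K ⟶ L} (n : ℤ) (k : K.X (n + 1) ⟶ L.X n)
    (h₀ : φ₁.f n = K.d n (n + 1) ≫ k + φ₂.f n)
    (h₁ : φ₁.f (n + 1) = k ≫ L.d n (n + 1) + φ₂.f (n + 1))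
    (h : ∀ i, i ≠ n → i ≠ n + 1 → φ₁.f i = φ₂.f i) : Homotopy φ₁ φ₂ :=
  (Cochain.equivHomotopy φ₁ φ₂).symm ⟨Cochain.single k (-1), by
    rw [Cochain.δ_single k (-1) 0 (by norm_num) n (n + 1) rfl rfl]
    ext i
    simp only [Cochain.add_v, Cochain.ofHom_v, Int.negOnePow_zero, one_smul]
    by_cases hn : i = n
    · subst hn
      rw [Cochain.single_v, Cochain.single_v_eq_zero _ _ _ _ _ (by omega), h₀]
      abel
    by_cases hn1 : i = n + 1
    · subst hn1
      rw [Cochain.single_v, Cochain.single_v_eq_zero _ _ _ _ _ (by omega), h₁]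
      abel
    rw [Cochain.single_v_eq_zero _ _ _ _ _ hn1, Cochain.single_v_eq_zero _ _ _ _ _ hn, h i hn hn1]
    abel⟩

end Homotopy

open CochainComplex

namespace GaussianElimination

variable {C : CochainComplex (ModuleCat R) ℤ} {n : ℤ} {A B A' B' : ModuleCat R}
  (e₁ : C.X n ≅ A ⊞ B) (e₂ : C.X (n + 1) ≅ A' ⊞ B') (ψ : A' ⟶ A)

lemma d_eq_ofComponents : C.d n (n + 1) = e₁.hom ≫
    Biprod.ofComponents (blkPhi C n e₁ e₂) (blkGamma C n e₁ e₂) (blkDelta C n e₁ e₂)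
      (blkEps C n e₁ e₂) ≫ e₂.inv := by
  rw [← Iso.inv_comp_eq, Iso.eq_comp_inv]
  apply biprod.hom_ext' <;> apply biprod.hom_ext <;>
    simp [blkPhi, blkGamma, blkDelta, blkEps]

noncomputable def proj₀ : C.X n ⟶ B := e₁.hom ≫ biprod.snd

noncomputable def proj₁ : C.X (n + 1) ⟶ B' :=
  e₂.hom ≫ (biprod.snd - biprod.fst ≫ ψ ≫ blkGamma C n e₁ e₂)

noncomputable def incl₀ : B ⟶ C.X n := biprod.lift (-(blkDelta C n e₁ e₂ ≫ ψ)) (𝟙 B) ≫ e₁.inv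

noncomputable def incl₁ : B' ⟶ C.X (n + 1) := biprod.inr ≫ e₂.inv

noncomputable def htpy : C.X (n + 1) ⟶ C.X n := -(e₂.hom ≫ biprod.fst ≫ ψ ≫ biprod.inl ≫ e₁.inv)

lemma incl₀_proj₀ : incl₀ e₁ e₂ ψ ≫ proj₀ e₁ = 𝟙 B := by
  simp [incl₀, proj₀]

lemma incl₁_proj₁ : incl₁ e₂ ≫ proj₁ e₁ e₂ ψ = 𝟙 B' := by
  simp [incl₁, proj₁]

variable {e₁ e₂ ψ} (hψ₁ : blkPhi C n e₁ e₂ ≫ ψ = 𝟙 A) (hψ₂ : ψ ≫ blkPhi C n e₁ e₂ = 𝟙 A')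

include hψ₁ in
lemma proj₀_incl₀ : proj₀ e₁ ≫ incl₀ e₁ e₂ ψ = C.d n (n + 1) ≫ htpy e₁ e₂ ψ + 𝟙 _ := by
  rw [d_eq_ofComponents e₁ e₂, ← cancel_epi e₁.inv, ← cancel_mono e₁.hom]
  apply biprod.hom_ext' <;> apply biprod.hom_ext <;>
    simp [proj₀, incl₀, htpy, Biprod.ofComponents, reassoc_of% hψ₁]

include hψ₂ in
lemma proj₁_incl₁ : proj₁ e₁ e₂ ψ ≫ incl₁ e₂ = htpy e₁ e₂ ψ ≫ C.d n (n + 1) + 𝟙 _ := by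
  rw [d_eq_ofComponents e₁ e₂, ← cancel_epi e₂.inv, ← cancel_mono e₂.hom]
  apply biprod.hom_ext' <;> apply biprod.hom_ext <;>
    simp [proj₁, incl₁, htpy, Biprod.ofComponents, reassoc_of% hψ₂]

include hψ₁ in
lemma htpy_d_proj₁ : htpy e₁ e₂ ψ ≫ C.d n (n + 1) ≫ proj₁ e₁ e₂ ψ = 0 := by
  rw [d_eq_ofComponents e₁ e₂]
  simp [proj₁, htpy, Biprod.ofComponents, reassoc_of% hψ₁]

include hψ₂ in
lemma incl₀_d_htpy : incl₀ e₁ e₂ ψ ≫ C.d n (n + 1) ≫ htpy e₁ e₂ ψ = 0 := by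
  rw [d_eq_ofComponents e₁ e₂]
  simp [incl₀, htpy, Biprod.ofComponents, reassoc_of% hψ₂]

include hψ₂ in
lemma incl₀_d_proj₁ : incl₀ e₁ e₂ ψ ≫ C.d n (n + 1) ≫ proj₁ e₁ e₂ ψ =
    blkEps C n e₁ e₂ - blkDelta C n e₁ e₂ ≫ ψ ≫ blkGamma C n e₁ e₂ := by
  rw [d_eq_ofComponents e₁ e₂]
  simp [incl₀, proj₁, Biprod.ofComponents, reassoc_of% hψ₂]
  abel

include hψ₁ in
lemma proj₀_incl₀_d_proj₁ : proj₀ e₁ ≫ incl₀ e₁ e₂ ψ ≫ C.d n (n + 1) ≫ proj₁ e₁ e₂ ψ =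
    C.d n (n + 1) ≫ proj₁ e₁ e₂ ψ := by
  simp [reassoc_of% (proj₀_incl₀ hψ₁), Preadditive.add_comp, htpy_d_proj₁ hψ₁]

include hψ₂ in
lemma proj₁_incl₁_d (m : ℤ) : proj₁ e₁ e₂ ψ ≫ incl₁ e₂ ≫ C.d (n + 1) m = C.d (n + 1) m := by
  simp [reassoc_of% (proj₁_incl₁ hψ₂), Preadditive.add_comp]

include hψ₁ in
lemma d_proj₀_incl₀ (m : ℤ) : C.d m n ≫ proj₀ e₁ ≫ incl₀ e₁ e₂ ψ = C.d m n := by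
  simp [proj₀_incl₀ hψ₁, Preadditive.comp_add]

include hψ₂ in
lemma incl₀_d_proj₁_incl₁ : incl₀ e₁ e₂ ψ ≫ C.d n (n + 1) ≫ proj₁ e₁ e₂ ψ ≫ incl₁ e₂ =
    incl₀ e₁ e₂ ψ ≫ C.d n (n + 1) := by
  simp [proj₁_incl₁ hψ₂, Preadditive.comp_add, reassoc_of% (incl₀_d_htpy hψ₂)]

variable (e₁ e₂ ψ)

noncomputable def proj (i : ℤ) : C.X i ⟶ C.spliceX n B B' i :=
  CochainComplex.toSpliceX (proj₀ e₁) (proj₁ e₁ e₂ ψ) i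

noncomputable def incl (i : ℤ) : C.spliceX n B B' i ⟶ C.X i :=
  CochainComplex.fromSpliceX (incl₀ e₁ e₂ ψ) (incl₁ e₂) i

variable {e₁ e₂ ψ}

include hψ₁ hψ₂ in
lemma proj_incl_d_proj (i : ℤ) : proj e₁ e₂ ψ i ≫ incl e₁ e₂ ψ i ≫ C.d i (i + 1) ≫
    proj e₁ e₂ ψ (i + 1) = C.d i (i + 1) ≫ proj e₁ e₂ ψ (i + 1) := by
  by_cases h₀ : i = n
  · subst h₀
    simp only [proj, incl, toSpliceX_self, fromSpliceX_self, toSpliceX_succ, Category.assoc,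
      eqToHom_trans_assoc, eqToHom_refl, Category.id_comp]
    rw [reassoc_of% (proj₀_incl₀_d_proj₁ hψ₁)]
  by_cases h₁ : i = n + 1
  · subst h₁
    simp only [proj, incl, toSpliceX_succ, fromSpliceX_succ, Category.assoc,
      eqToHom_trans_assoc, eqToHom_refl, Category.id_comp]
    rw [reassoc_of% (proj₁_incl₁_d hψ₂)]
  unfold proj incl
  rw [reassoc_of% (toSpliceX_comp_fromSpliceX_of_ne _ _ _ _ h₀ h₁)]

include hψ₁ hψ₂ in
lemma incl_d_proj_incl (i : ℤ) : incl e₁ e₂ ψ i ≫ C.d i (i + 1) ≫ proj e₁ e₂ ψ (i + 1) ≫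
    incl e₁ e₂ ψ (i + 1) = incl e₁ e₂ ψ i ≫ C.d i (i + 1) := by
  by_cases h₀ : i + 1 = n
  · subst h₀
    simp only [proj, incl, toSpliceX_self, fromSpliceX_self, Category.assoc,
      eqToHom_trans_assoc, eqToHom_refl, Category.id_comp]
    rw [d_proj₀_incl₀ hψ₁]
  by_cases h₁ : i = n
  · subst h₁
    simp only [proj, incl, toSpliceX_succ, fromSpliceX_self, fromSpliceX_succ, Category.assoc,
      eqToHom_trans_assoc, eqToHom_refl, Category.id_comp]
    rw [incl₀_d_proj₁_incl₁ hψ₂]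
  unfold proj incl
  rw [toSpliceX_comp_fromSpliceX_of_ne _ _ _ _ h₀ (by omega), Category.comp_id]

noncomputable abbrev complex : CochainComplex (ModuleCat R) ℤ :=
  C.ofDegreewiseRetract (proj e₁ e₂ ψ) (incl e₁ e₂ ψ) (incl_d_proj_incl hψ₁ hψ₂)

lemma complex_d (i j : ℤ) : (complex hψ₁ hψ₂).d i j = incl e₁ e₂ ψ i ≫ C.d i j ≫ proj e₁ e₂ ψ j :=
  rfl

noncomputable def homotopyEquiv : HomotopyEquiv C (complex hψ₁ hψ₂) :=
  ofDegreewiseRetract.homotopyEquiv C _ _ (proj_incl_d_proj hψ₁ hψ₂) _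
    (fromSpliceX_comp_toSpliceX _ _ _ _ (incl₀_proj₀ e₁ e₂ ψ) (incl₁_proj₁ e₁ e₂ ψ))
    (Homotopy.ofSingle n (htpy e₁ e₂ ψ)
      (by simpa [proj, incl, toSpliceX_self, fromSpliceX_self]
        using proj₀_incl₀ hψ₁)
      (by simpa [proj, incl, toSpliceX_succ, fromSpliceX_succ]
        using proj₁_incl₁ hψ₂)
      (fun i h₀ h₁ => toSpliceX_comp_fromSpliceX_of_ne _ _ _ _ h₀ h₁))

end GaussianElimination

/-- **Gaussian elimination.** If the chain spaces in degrees `n`, `n+1` of a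
cochain complex `C` of `R`-modules decompose as `C₁ⁿ ⊕ C₂ⁿ` and `C₁ⁿ⁺¹ ⊕ C₂ⁿ⁺¹`, with the
differential `dⁿ` given in block form by `[[φ, δ], [γ, ε]]` and `φ` an isomorphism (with
two-sided inverse `ψ`), then `C` is chain homotopy equivalent to a complex `C'` which agrees
with `C` outside degrees `n`, `n+1`, has `C'ⁿ = C₂ⁿ`, `C'ⁿ⁺¹ = C₂ⁿ⁺¹`, differential
`ε − γ ∘ φ⁻¹ ∘ δ` in degree `n`, restriction `β` of `d^{n-1}` to the second summand in degree
`n-1`, and restriction `ν` of `dⁿ⁺¹` to the second summand in degree `n+1`. -/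
theorem stmt_9 (C : CochainComplex (ModuleCat R) ℤ) (n : ℤ)
    {A B A' B' : ModuleCat R} (e₁ : C.X n ≅ A ⊞ B) (e₂ : C.X (n + 1) ≅ A' ⊞ B')
    (ψ : A' ⟶ A) (hψ₁ : blkPhi C n e₁ e₂ ≫ ψ = 𝟙 A) (hψ₂ : ψ ≫ blkPhi C n e₁ e₂ = 𝟙 A') :
    ∃ (C' : CochainComplex (ModuleCat R) ℤ) (_ : HomotopyEquiv C C')
      (hX : ∀ i, i ≠ n → i ≠ n + 1 → C'.X i = C.X i)
      (en : C'.X n ≅ B) (en1 : C'.X (n + 1) ≅ B'),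
      -- the new degree-`n` differential is `ε − γ ∘ φ⁻¹ ∘ δ`
      (en.inv ≫ C'.d n (n + 1) ≫ en1.hom =
        blkEps C n e₁ e₂ - blkDelta C n e₁ e₂ ≫ ψ ≫ blkGamma C n e₁ e₂) ∧
      -- the degree-`n-1` differential is `β`, the second component of `d^{n-1}`
      (C'.d (n - 1) n ≫ en.hom =
        eqToHom (hX (n - 1) (by omega) (by omega)) ≫ C.d (n - 1) n ≫ e₁.hom ≫ biprod.snd) ∧
      -- the degree-`n+1` differential is `ν`, the restriction of `d^{n+1}` to the
      -- second summand
      (en1.inv ≫ C'.d (n + 1) (n + 1 + 1) =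
        biprod.inr ≫ e₂.inv ≫ C.d (n + 1) (n + 1 + 1) ≫
          eqToHom (hX (n + 1 + 1) (by omega) (by omega)).symm) ∧
      -- outside degrees `n-1`, `n`, `n+1` the differentials of `C'` agree with those of `C`
      (∀ i, ∀ (_ : i ≠ n - 1) (h₂ : i ≠ n) (h₃ : i ≠ n + 1),
        C'.d i (i + 1) = eqToHom (hX i h₂ h₃) ≫ C.d i (i + 1) ≫
          eqToHom (hX (i + 1) (by omega) (by omega)).symm) := by
  open GaussianElimination in
  refine ⟨complex hψ₁ hψ₂, homotopyEquiv hψ₁ hψ₂, fun i h₀ h₁ => C.spliceX_of_ne n h₀ h₁,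
    eqToIso (C.spliceX_self n), eqToIso (C.spliceX_succ n), ?_, ?_, ?_, ?_⟩
  · simpa [complex_d, incl, proj, fromSpliceX_self, toSpliceX_succ] using incl₀_d_proj₁ hψ₂
  · rw [complex_d, incl, proj, fromSpliceX_of_ne _ _ (by omega) (by omega),
      toSpliceX_self]
    simp [proj₀]
  · rw [complex_d, incl, proj, fromSpliceX_succ,
      toSpliceX_of_ne _ _ (by omega) (by omega)]
    simp [incl₁]
  · intro i _ h₀ h₁
    rw [complex_d, incl, proj, fromSpliceX_of_ne _ _ h₀ h₁,
      toSpliceX_of_ne _ _ (by omega) (by omega)]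

end
end

section
/- Suppose nonnegative real sequences x_t^{(i)} (indexed by t ≥ 1 and i ∈ ℤ) satisfy: x_t^{(i)} = 0 whenever i < 0 or i ≥ t; x_1^{(0)} ≤ 2^{(g/2+1)}; and x_{t+1}^{(i)} ≤ 3·2^{g/2−1}·max(x_t^{(i)}, 1)·max(x_t^{(i−1)}, 1) for all t, i, where g ≥ 2 is a fixed constant. Then x_t^{(i)} ≤ 2^{(g/2+1)(C(t+1, i+1) − 1)} for all t ≥ 1 and all i, where C(n, k) denotes the binomial coefficient. -/
/-- The binomial coefficient `C(n, k)` for `k : ℤ`, with `C(n, k) = 0` for `k < 0`. -/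
def binomZ (n : ℕ) (k : ℤ) : ℕ := if k < 0 then 0 else n.choose k.toNat

/-!
Put `B = g/2 + 1` and `b_t^{(i)} = 2^{B (C(t+1, i+1) - 1)}`. Since `3 · 2^{g/2-1} ≤ 2^B`,
Pascal's rule `C(t+2, i+1) = C(t+1, i+1) + C(t+1, i)` turns the recursion into
`x_{t+1}^{(i)} ≤ 2^B · b_t^{(i)} · b_t^{(i-1)} = b_{t+1}^{(i)}`, provided the factors
`max(x_t^{(·)}, 1)` are bounded by `b_t^{(·)}`. So `max(x_t^{(i)}, 1) ≤ b_t^{(i)}` is proved by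
induction on `t` from `t = 0`, for `-1 ≤ i ≤ t`, where `C(t+1, i+1) ≥ 1`; at the ends of this
range, and for `t = 0`, the entry `x_t^{(i)}` vanishes.
-/

theorem binomZ_of_neg {n : ℕ} {k : ℤ} (hk : k < 0) : binomZ n k = 0 := if_pos hk

theorem binomZ_natCast (n k : ℕ) : binomZ n k = n.choose k := by
  simp [binomZ]

theorem binomZ_succ_succ (n : ℕ) (k : ℤ) :
    binomZ (n + 1) (k + 1) = binomZ n k + binomZ n (k + 1) := by
  rcases k with m | _ | m
  · exact_mod_cast binomZ_natCast (n + 1) (m + 1) ▸ Nat.choose_succ_succ n m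
  · simp [binomZ]
  · simp only [binomZ_of_neg (Int.negSucc_lt_zero _)]
    rw [binomZ_of_neg (by omega), binomZ_of_neg (by omega)]

theorem one_le_binomZ {n : ℕ} {k : ℤ} (hk₀ : 0 ≤ k) (hkn : k ≤ n) : 1 ≤ binomZ n k := by
  lift k to ℕ using hk₀
  rw [binomZ_natCast]
  exact Nat.choose_pos (by omega)

theorem three_mul_two_rpow_sub_one_le (a : ℝ) : 3 * (2 : ℝ) ^ (a - 1) ≤ 2 ^ (a + 1) := by
  have h : (2 : ℝ) ^ (a + 1) = 4 * 2 ^ (a - 1) := by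
    rw [show a + 1 = (a - 1) + 2 by ring, Real.rpow_add two_pos, Real.rpow_two]
    ring
  rw [h]
  have := Real.rpow_nonneg zero_le_two (a - 1)
  linarith

noncomputable def binomBound (B : ℝ) (t : ℕ) (i : ℤ) : ℝ :=
  2 ^ (B * ((binomZ (t + 1) (i + 1) : ℝ) - 1))

theorem one_le_binomBound {B : ℝ} (hB : 0 ≤ B) {t : ℕ} {i : ℤ} (hi₀ : -1 ≤ i) (hit : i ≤ t) :
    1 ≤ binomBound B t i := by
  have : (1 : ℝ) ≤ binomZ (t + 1) (i + 1) := by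
    exact_mod_cast one_le_binomZ (by omega) (by push_cast; omega)
  exact Real.one_le_rpow one_le_two (by nlinarith)

theorem two_rpow_mul_binomBound_mul_binomBound (B : ℝ) (t : ℕ) (i : ℤ) :
    2 ^ B * binomBound B t i * binomBound B t (i - 1) = binomBound B (t + 1) i := by
  unfold binomBound
  rw [sub_add_cancel, ← Real.rpow_add two_pos, ← Real.rpow_add two_pos, binomZ_succ_succ (t + 1) i]
  push_cast
  ring_nf

section Recursion

variable {B c : ℝ} (hB : 0 ≤ B) (hc : c ≤ 2 ^ B) {x : ℕ → ℤ → ℝ}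
  (hz : ∀ (t : ℕ) (i : ℤ), (i < 0 ∨ (t : ℤ) ≤ i) → x t i = 0)
  (hrec : ∀ (t : ℕ) (i : ℤ), x (t + 1) i ≤ c * max (x t i) 1 * max (x t (i - 1)) 1)
include hB hc hz hrec

theorem max_one_le_binomBound_of_rec (t : ℕ) (i : ℤ) (hi₀ : -1 ≤ i) (hit : i ≤ t) :
    max (x t i) 1 ≤ binomBound B t i := by
  induction t generalizing i with
  | zero => rw [hz 0 i (by omega), max_eq_right zero_le_one]; exact one_le_binomBound hB hi₀ hit
  | succ t ih =>
    refine max_le ?_ (one_le_binomBound hB hi₀ hit)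
    by_cases hzero : i < 0 ∨ ((t + 1 : ℕ) : ℤ) ≤ i
    · rw [hz _ _ hzero]
      exact zero_le_one.trans (one_le_binomBound hB hi₀ hit)
    · calc x (t + 1) i ≤ c * max (x t i) 1 * max (x t (i - 1)) 1 := hrec t i
        _ ≤ 2 ^ B * binomBound B t i * binomBound B t (i - 1) := by
          have hbound_pos : 0 ≤ binomBound B t i := Real.rpow_nonneg zero_le_two _
          gcongr
          · exact ih i (by omega) (by omega)
          · exact ih (i - 1) (by omega) (by omega)
        _ = binomBound B (t + 1) i := two_rpow_mul_binomBound_mul_binomBound B t i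

theorem le_binomBound_of_rec (t : ℕ) (i : ℤ) : x t i ≤ binomBound B t i := by
  by_cases hi : -1 ≤ i ∧ i ≤ t
  · exact (le_max_left _ _).trans (max_one_le_binomBound_of_rec hB hc hz hrec t i hi.1 hi.2)
  · rw [hz t i (by omega)]
    exact Real.rpow_nonneg zero_le_two _

end Recursion

theorem stmt_13_general (g : ℝ) (hg : 2 ≤ g) (x : ℕ → ℤ → ℝ)
    (hz : ∀ (t : ℕ) (i : ℤ), (i < 0 ∨ (t : ℤ) ≤ i) → x t i = 0)
    (hrec : ∀ (t : ℕ) (i : ℤ),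
      x (t + 1) i ≤ 3 * (2 : ℝ) ^ (g / 2 - 1) * max (x t i) 1 * max (x t (i - 1)) 1) :
    ∀ t : ℕ, 1 ≤ t → ∀ i : ℤ,
      x t i ≤ (2 : ℝ) ^ ((g / 2 + 1) * ((binomZ (t + 1) (i + 1) : ℝ) - 1)) := by
  have hB : 0 ≤ g / 2 + 1 := by linarith
  exact fun t _ i ↦ le_binomBound_of_rec hB (three_mul_two_rpow_sub_one_le (g / 2)) hz hrec t i

/-- If nonnegative reals `x_t^{(i)}` (`t ≥ 1`, `i ∈ ℤ`) vanish for `i < 0`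
or `i ≥ t`, satisfy `x_1^{(0)} ≤ 2^{g/2+1}` and the recursion
`x_{t+1}^{(i)} ≤ 3·2^{g/2−1}·max(x_t^{(i)},1)·max(x_t^{(i−1)},1)` with `g ≥ 2`, then
`x_t^{(i)} ≤ 2^{(g/2+1)(C(t+1, i+1) − 1)}` for all `t ≥ 1` and all `i`. -/
theorem stmt_13 (g : ℝ) (hg : 2 ≤ g) (x : ℕ → ℤ → ℝ)
    (hx0 : ∀ t i, 0 ≤ x t i)
    (hz : ∀ (t : ℕ) (i : ℤ), (i < 0 ∨ (t : ℤ) ≤ i) → x t i = 0)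
    (hbase : x 1 0 ≤ (2 : ℝ) ^ (g / 2 + 1))
    (hrec : ∀ (t : ℕ) (i : ℤ),
      x (t + 1) i ≤ 3 * (2 : ℝ) ^ (g / 2 - 1) * max (x t i) 1 * max (x t (i - 1)) 1) :
    ∀ t : ℕ, 1 ≤ t → ∀ i : ℤ,
      x t i ≤ (2 : ℝ) ^ ((g / 2 + 1) * ((binomZ (t + 1) (i + 1) : ℝ) - 1)) :=
  stmt_13_general g hg x hz hrec
end

section
/- Let n ≥ 2 and m ≥ 1 and suppose real numbers D(n, m) ≥ 0 satisfy the recursion D(n, m) ≤ D(n, m−1) + 2·D(s, t) for some s ≤ n−2 and t ≤ m (depending on n, m), with base cases D(2, m) ≤ c₂·m and D(3, m) ≤ c₃·m for constants c₂, c₃, and D(n, 0) ≤ c₀ for a constant c₀. Then for each n there is a constant c_n such that D(n, m) ≤ c_n · m^{⌊n/2⌋} for all m ≥ 1. -/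
/-- Suppose nonnegative reals `D(n, m)` satisfy the skein-type recursion
`D(n, m) ≤ D(n, m−1) + 2·D(s, t)` for some `2 ≤ s ≤ n−2` and `t ≤ m` (for `n ≥ 4`, `m ≥ 1`),
with base cases `D(2, m) ≤ c₂·m`, `D(3, m) ≤ c₃·m` and `D(n, 0) ≤ c₀`.  Then for each
`n ≥ 2` there is a constant `c_n` with `D(n, m) ≤ c_n · m^{⌊n/2⌋}` for all `m ≥ 1`. -/
theorem stmt_15 (D : ℕ → ℕ → ℝ) (c₀ c₂ c₃ : ℝ)
    (hnn : ∀ n m, 0 ≤ D n m)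
    (h0 : ∀ n, D n 0 ≤ c₀)
    (h2 : ∀ m, 1 ≤ m → D 2 m ≤ c₂ * m)
    (h3 : ∀ m, 1 ≤ m → D 3 m ≤ c₃ * m)
    (hrec : ∀ n, 4 ≤ n → ∀ m, 1 ≤ m → ∃ s t, 2 ≤ s ∧ s ≤ n - 2 ∧ t ≤ m ∧
      D n m ≤ D n (m - 1) + 2 * D s t) :
    ∀ n, 2 ≤ n → ∃ c : ℝ, ∀ m, 1 ≤ m → D n m ≤ c * (m : ℝ) ^ (n / 2) := by
  have hc₀ : 0 ≤ c₀ := le_trans (hnn 0 0) (h0 0)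
  -- strengthened statement with a uniform constant for all k ≤ n
  have main : ∀ n, 2 ≤ n → ∃ c : ℝ, 0 ≤ c ∧ ∀ k, 2 ≤ k → k ≤ n →
      ∀ m, 1 ≤ m → D k m ≤ c * (m : ℝ) ^ (k / 2) := by
    intro n hn
    induction n, hn using Nat.le_induction with
    | base =>
      refine ⟨max c₂ 0, le_max_right _ _, ?_⟩
      intro k hk2 hk m hm
      have hk' : k = 2 := by omega
      subst hk'
      have hm1 : (1:ℝ) ≤ (m:ℝ) := by exact_mod_cast hm
      calc D 2 m ≤ c₂ * m := h2 m hm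
        _ ≤ max c₂ 0 * (m:ℝ) ^ (2/2) := by
            norm_num
            have : (0:ℝ) ≤ (m:ℝ) := by positivity
            nlinarith [le_max_left c₂ (0:ℝ)]
    | succ n hn ih =>
      obtain ⟨c, hc, hcb⟩ := ih
      by_cases hN : n + 1 = 3
      · refine ⟨max c (max c₃ 0), le_trans hc (le_max_left _ _), ?_⟩
        intro k hk2 hk m hm
        have hm1 : (1:ℝ) ≤ (m:ℝ) := by exact_mod_cast hm
        have hm0 : (0:ℝ) ≤ (m:ℝ) := by positivity
        rcases Nat.lt_or_ge k 3 with h | h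
        · have := hcb k hk2 (by omega) m hm
          have hpow : (0:ℝ) ≤ (m:ℝ) ^ (k/2) := by positivity
          nlinarith [le_max_left c (max c₃ 0)]
        · have hk' : k = 3 := by omega
          subst hk'
          calc D 3 m ≤ c₃ * m := h3 m hm
            _ ≤ max c (max c₃ 0) * (m:ℝ) ^ (3/2) := by
                norm_num
                nlinarith [le_max_right c₃ (0:ℝ), le_max_right c (max c₃ 0),
                  le_max_left c₃ (0:ℝ)]
      · -- n + 1 ≥ 4
        have hN4 : 4 ≤ n + 1 := by omega
        set N := n + 1 with hNdef
        have hE2 : 2 ≤ N / 2 := by omega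
        obtain ⟨e, he⟩ : ∃ e, N / 2 = e + 1 := ⟨N / 2 - 1, by omega⟩
        -- bound for the side terms
        have hside : ∀ s t m, 2 ≤ s → s ≤ N - 2 → t ≤ m → 1 ≤ m →
            D s t ≤ c₀ + c * (m:ℝ) ^ e := by
          intro s t m hs2 hsn htm hm
          have hm1 : (1:ℝ) ≤ (m:ℝ) := by exact_mod_cast hm
          have hpow1 : (1:ℝ) ≤ (m:ℝ) ^ e := one_le_pow₀ hm1
          rcases Nat.eq_zero_or_pos t with ht0 | ht1
          · subst ht0
            have := h0 s
            nlinarith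
          · have hst : s / 2 ≤ e := by omega
            have h1 : D s t ≤ c * (t:ℝ) ^ (s/2) := hcb s hs2 (by omega) t ht1
            have h2' : (t:ℝ) ^ (s/2) ≤ (m:ℝ) ^ (s/2) := by
              apply pow_le_pow_left₀ (by positivity)
              exact_mod_cast htm
            have h3' : (m:ℝ) ^ (s/2) ≤ (m:ℝ) ^ e :=
              pow_le_pow_right₀ hm1 hst
            nlinarith
        -- key induction on m
        have key : ∀ m : ℕ, D N m ≤ c₀ + 2 * (c₀ + c) * (m:ℝ) ^ (e + 1) := by
          intro m
          induction m with
          | zero => simpa using h0 N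
          | succ k ihk =>
            obtain ⟨s, t, hs2, hsn, htm, hDle⟩ := hrec N hN4 (k+1) (by omega)
            have hb := hside s t (k+1) hs2 hsn htm (by omega)
            have hk1 : (1:ℝ) ≤ ((k:ℝ)+1) := by
              have := Nat.cast_nonneg (α := ℝ) k; linarith
            have hkpow : (1:ℝ) ≤ ((k:ℝ)+1) ^ e := one_le_pow₀ hk1
            have hkk : ((k:ℕ):ℝ) ^ (e+1) ≤ (k:ℝ) * ((k:ℝ)+1) ^ e := by
              rw [pow_succ']
              have : ((k:ℝ)) ^ e ≤ ((k:ℝ)+1) ^ e :=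
                pow_le_pow_left₀ (by positivity) (by linarith) _
              nlinarith [pow_nonneg (by positivity : (0:ℝ) ≤ (k:ℝ)) e]
            have hcast : ((k+1:ℕ):ℝ) = (k:ℝ) + 1 := by push_cast; ring
            have hcast2 : ((k+1:ℕ):ℝ) ^ e = ((k:ℝ)+1) ^ e := by rw [hcast]
            rw [hcast]
            simp only [Nat.add_sub_cancel] at hDle
            rw [hcast2] at hb
            calc D N (k+1) ≤ D N k + 2 * D s t := hDle
              _ ≤ (c₀ + 2*(c₀+c)*(k:ℝ)^(e+1)) + 2*(c₀ + c*((k:ℝ)+1)^e) := by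
                  linarith
              _ ≤ c₀ + 2*(c₀+c)*((k:ℝ)+1)^(e+1) := by
                  nlinarith [pow_succ' ((k:ℝ)+1) e]
        refine ⟨max c (c₀ + 2*(c₀+c)), le_trans hc (le_max_left _ _), ?_⟩
        intro k hk2 hk m hm
        have hm1 : (1:ℝ) ≤ (m:ℝ) := by exact_mod_cast hm
        rcases Nat.lt_or_ge k N with h | h
        · have := hcb k hk2 (by omega) m hm
          have hpow : (0:ℝ) ≤ (m:ℝ) ^ (k/2) := by positivity
          nlinarith [le_max_left c (c₀ + 2*(c₀+c))]
        · have hk' : k = N := by omega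
          subst hk'
          have hkey := key m
          have hpow1 : (1:ℝ) ≤ (m:ℝ) ^ (e+1) := one_le_pow₀ hm1
          have hpow0 : (0:ℝ) ≤ (m:ℝ) ^ (e+1) := by positivity
          have hmax : c₀ + 2*(c₀+c) ≤ max c (c₀ + 2*(c₀+c)) :=
            le_max_right _ _
          show D N m ≤ max c (c₀ + 2*(c₀+c)) * (m:ℝ) ^ (N/2)
          rw [he]
          nlinarith
  intro n hn
  obtain ⟨c, _, hcb⟩ := main n hn
  exact ⟨c, fun m hm => hcb n hn le_rfl m hm⟩
end
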